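/- For every nonempty finite set X, the sum over all ordered set partitions (S_1,…,S_k) of X into nonempty blocks of (-1)^k equals (-1)^{|X|}. -/

import Mathlib

/-!
Splitting off the first block `B` gives a bijection between compositions of a nonempty `X` and
pairs of a nonempty `B ⊆ X` with a composition of `X \ B`, and the sign flips. By strong induction
the sum is therefore `-∑_{∅ ≠ B ⊆ X} (-1)^{|X \ B|} = -(-1)^{|X|} ∑_{∅ ≠ B ⊆ X} (-1)^{|B|}`, and
the last sum is `-1` because the alternating sum over all subsets of a nonempty set vanishes.
-/

namespace GraphSpecies

variable {V : Type*}

def IsOrientationOn (G : SimpleGraph V) (S : Set V) (O : V → V → Prop) : Prop :=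
  (∀ u v, O u v → u ∈ S ∧ v ∈ S ∧ G.Adj u v) ∧
  (∀ u v, u ∈ S → v ∈ S → G.Adj u v → O u v ∨ O v u) ∧
  (∀ u v, ¬ (O u v ∧ O v u))

def IsAcyclicOrientationOn (G : SimpleGraph V) (S : Set V) (O : V → V → Prop) : Prop :=
  IsOrientationOn G S O ∧ Irreflexive (Relation.TransGen O)

def restrictO (O : V → V → Prop) (A : Set V) : V → V → Prop :=
  fun u v => O u v ∧ u ∈ A ∧ v ∈ A

def prodO (G : SimpleGraph V) (S T : Set V) (O P : V → V → Prop) : V → V → Prop :=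
  fun u v => O u v ∨ P u v ∨ (u ∈ S ∧ v ∈ T ∧ G.Adj u v)

def flipO (O : V → V → Prop) : V → V → Prop := fun u v => O v u

noncomputable def eCount (O : V → V → Prop) (A B : Set V) : ℕ :=
  {p : V × V | O p.1 p.2 ∧ p.1 ∈ A ∧ p.2 ∈ B}.ncard

noncomputable def eCross (G : SimpleGraph V) (A B : Set V) : ℕ :=
  {p : V × V | G.Adj p.1 p.2 ∧ p.1 ∈ A ∧ p.2 ∈ B}.ncard

def IsComposition [DecidableEq V] (X : Finset V) (C : List (Finset V)) : Prop :=
  (∀ B ∈ C, B.Nonempty) ∧ C.Pairwise Disjoint ∧ C.foldr (· ∪ ·) ∅ = X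

def earlier (C : List (Finset V)) (u v : V) : Prop :=
  ∃ i j : Fin C.length, i < j ∧ u ∈ C.get i ∧ v ∈ C.get j

def sameBlock (C : List (Finset V)) (u v : V) : Prop :=
  ∃ i : Fin C.length, u ∈ C.get i ∧ v ∈ C.get i

def restrictC [DecidableEq V] (C : List (Finset V)) (S : Finset V) : List (Finset V) :=
  (C.map (· ∩ S)).filter fun B => B.Nonempty

def IsStableComposition [DecidableEq V] (G : SimpleGraph V) (S : Finset V)
    (C : List (Finset V)) : Prop :=
  IsComposition S C ∧ ∀ B ∈ C, ∀ u ∈ B, ∀ v ∈ B, ¬ G.Adj u v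

def edgeRestrict (F : Set (Sym2 V)) (S : Set V) : Set (Sym2 V) :=
  {e | e ∈ F ∧ ∀ v ∈ e, v ∈ S}

def IsFlatOn (G : SimpleGraph V) (S : Set V) (F : Set (Sym2 V)) : Prop :=
  F ⊆ G.edgeSet ∧ (∀ e ∈ F, ∀ v ∈ e, v ∈ S) ∧
  ∀ u v, u ∈ S → v ∈ S → G.Adj u v →
    (SimpleGraph.fromEdgeSet F).Reachable u v → s(u, v) ∈ F

def IsLinList (ℓ : List V) : Prop := ℓ.Nodup ∧ ∀ v : V, v ∈ ℓ

def after [DecidableEq V] (ℓ : List V) (u v : V) : Prop :=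
  ℓ.idxOf v < ℓ.idxOf u

def linOfComp [DecidableEq V] (ℓ : List V) (C : List (Finset V)) : List V :=
  (C.map fun B => ℓ.filter fun v => v ∈ B).flatten

section Compositions

open Finset

variable [DecidableEq V]

lemma mem_foldr_union {C : List (Finset V)} {v : V} :
    v ∈ C.foldr (· ∪ ·) ∅ ↔ ∃ B ∈ C, v ∈ B := by
  induction C with
  | nil => simp
  | cons A C ih => simp [ih]

lemma isComposition_nil_iff {X : Finset V} : IsComposition X [] ↔ X = ∅ := by
  simp [IsComposition, eq_comm]

lemma isComposition_cons_iff {X B : Finset V} {C : List (Finset V)} :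
    IsComposition X (B :: C) ↔ B.Nonempty ∧ B ⊆ X ∧ IsComposition (X \ B) C := by
  simp only [IsComposition, List.forall_mem_cons, List.pairwise_cons, List.foldr_cons]
  set U := C.foldr (· ∪ ·) ∅
  have disjoint_iff : (∀ B' ∈ C, Disjoint B B') ↔ Disjoint B U := by
    simp only [disjoint_left, U, mem_foldr_union]
    grind
  rw [disjoint_iff]
  constructor
  · rintro ⟨⟨hB, hne⟩, ⟨hBU, hd⟩, rfl⟩
    exact ⟨hB, subset_union_left, hne, hd, (union_sdiff_cancel_left hBU).symm⟩
  · rintro ⟨hB, hBX, hne, hd, hU⟩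
    exact ⟨⟨hB, hne⟩, ⟨hU ▸ sdiff_disjoint.symm, hd⟩, by rw [hU, union_sdiff_of_subset hBX]⟩

lemma IsComposition.length_le_card {X : Finset V} {C : List (Finset V)}
    (hC : IsComposition X C) : C.length ≤ #X := by
  induction C generalizing X with
  | nil => simp
  | cons B C ih =>
    obtain ⟨hB, hBX, hC⟩ := isComposition_cons_iff.1 hC
    have hlen := ih hC
    rw [card_sdiff_of_subset hBX] at hlen
    have hBpos := hB.card_pos
    have hBle := card_le_card hBX
    rw [List.length_cons]
    omega

lemma finite_setOf_isComposition (X : Finset V) :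
    {C : List (Finset V) | IsComposition X C}.Finite := by
  refine ((List.finite_length_le X.powerset #X).image (List.map (↑))).subset fun C hC => ?_
  have hsub : ∀ B ∈ C, B ∈ X.powerset := fun B hB => mem_powerset.2 fun v hv =>
    hC.2.2 ▸ mem_foldr_union.2 ⟨B, hB, hv⟩
  exact ⟨C.pmap Subtype.mk hsub, by simpa using hC.length_le_card, by simp [List.map_pmap]⟩

noncomputable def compositions (X : Finset V) : Finset (List (Finset V)) :=
  (finite_setOf_isComposition X).toFinset

@[simp]
lemma mem_compositions {X : Finset V} {C : List (Finset V)} :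
    C ∈ compositions X ↔ IsComposition X C :=
  Set.Finite.mem_toFinset _

lemma compositions_empty : compositions (∅ : Finset V) = {[]} := by
  ext (_ | ⟨B, C⟩)
  · simp [isComposition_nil_iff]
  · simp only [mem_compositions, isComposition_cons_iff, subset_empty, mem_singleton,
      reduceCtorEq, iff_false]
    rintro ⟨hB, rfl, -⟩
    exact not_nonempty_empty hB

lemma sum_compositions_of_nonempty {M : Type*} [AddCommMonoid M] {X : Finset V}
    (hX : X.Nonempty) (f : List (Finset V) → M) :
    ∑ C ∈ compositions X, f C =
      ∑ B ∈ X.powerset.erase ∅, ∑ C ∈ compositions (X \ B), f (B :: C) := by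
  rw [sum_sigma']
  symm
  refine sum_nbij' (fun p => p.1 :: p.2) (fun C => ⟨C.headI, C.tail⟩) ?_ ?_ (fun _ _ => rfl) ?_
    (fun _ _ => rfl)
  · rintro ⟨B, C⟩ h
    simp only [mem_sigma, mem_erase, mem_powerset, mem_compositions] at h ⊢
    exact isComposition_cons_iff.2 ⟨nonempty_iff_ne_empty.2 h.1.1, h.1.2, h.2⟩
  · rintro (_ | ⟨B, C⟩) h
    · simp [isComposition_nil_iff, hX.ne_empty] at h
    · simpa [isComposition_cons_iff, nonempty_iff_ne_empty, and_assoc] using h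
  · rintro (_ | ⟨B, C⟩) h
    · simp [isComposition_nil_iff, hX.ne_empty] at h
    · rfl

lemma sum_powerset_erase_empty_neg_one_pow_card_sdiff {X : Finset V} (hX : X.Nonempty) :
    ∑ B ∈ X.powerset.erase ∅, (-1 : ℤ) ^ #(X \ B) = -(-1) ^ #X := by
  have sign_sdiff : ∀ B ∈ X.powerset.erase ∅, (-1 : ℤ) ^ #(X \ B) = (-1) ^ #X * (-1) ^ #B := by
    intro B hB
    rw [← card_sdiff_add_card_eq_card (mem_powerset.1 (mem_of_mem_erase hB)), pow_add,
      mul_assoc, ← pow_add, ← two_mul, pow_mul, neg_one_sq, one_pow, mul_one]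
  rw [sum_congr rfl sign_sdiff, ← mul_sum, sum_erase_eq_sub (empty_mem_powerset X),
    sum_powerset_neg_one_pow_card_of_nonempty hX]
  simp

theorem sum_compositions_neg_one_pow_length (X : Finset V) :
    ∑ C ∈ compositions X, (-1 : ℤ) ^ C.length = (-1) ^ #X := by
  induction X using Finset.strongInduction with
  | H X ih =>
  obtain rfl | hX := X.eq_empty_or_nonempty
  · simp [compositions_empty]
  calc ∑ C ∈ compositions X, (-1 : ℤ) ^ C.length
      = ∑ B ∈ X.powerset.erase ∅, -(-1 : ℤ) ^ #(X \ B) := by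
        rw [sum_compositions_of_nonempty hX]
        refine sum_congr rfl fun B hB => ?_
        obtain ⟨hB, hBX⟩ := mem_erase.1 hB
        simp only [List.length_cons, pow_succ, mul_neg_one, sum_neg_distrib]
        rw [ih _ (sdiff_ssubset (mem_powerset.1 hBX) (nonempty_iff_ne_empty.2 hB))]
    _ = (-1) ^ #X := by
        rw [sum_neg_distrib, sum_powerset_erase_empty_neg_one_pow_card_sdiff hX, neg_neg]

end Compositions

theorem sum_of_signs_over_compositions_general {V : Type*} [DecidableEq V]
    (X : Finset V) :
    ∑ᶠ C ∈ {C : List (Finset V) | IsComposition X C}, ((-1 : ℤ)) ^ C.length =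
      (-1 : ℤ) ^ X.card := by
  rw [← Set.Finite.coe_toFinset (finite_setOf_isComposition X), finsum_mem_coe_finset]
  exact sum_compositions_neg_one_pow_length X

theorem sum_of_signs_over_compositions {V : Type*} [DecidableEq V]
    (X : Finset V) (hX : X.Nonempty) :
    ∑ᶠ C ∈ {C : List (Finset V) | IsComposition X C}, ((-1 : ℤ)) ^ C.length =
      (-1 : ℤ) ^ X.card :=
  sum_of_signs_over_compositions_general X

end GraphSpecies
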